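/- arXiv:1107.3174 — 2 statements merged into one kernel-verified Lean document; each statement's English description precedes it below -/
import Mathlib

section
/- (Heisenberg Uncertainty Principle for linear Gaussian quantum systems, system-theoretic form.) Let J denote the 2×2 real matrix [[0,1],[-1,0]], and let Θ = diag_n(J) be the 2n×2n block-diagonal matrix with J repeated n times. Let A be a real 2n×2n Hurwitz matrix, B a real 2n×2m matrix, S_w a real symmetric 2m×2m matrix, and T_w a Hermitian 2m×2m complex matrix such that F_w = S_w + T_w is positive semidefinite. Suppose the real symmetric 2n×2n matrix P satisfies A·P + P·Aᵀ + B·S_w·Bᵀ = 0, and suppose A·Θ + Θ·Aᵀ − i·B·T_w·Bᵀ = 0. Then the complex matrix P + iΘ is positive semidefinite. -/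
/-!
With `M = P + iΘ`, the two hypotheses add up to the Lyapunov equation
`A M + M Aᴴ + B F_w Bᴴ = 0`: multiplying the commutation condition by `i` turns `-i B T_w Bᵀ`
into `B T_w Bᵀ`. For Hurwitz `A`, a Hermitian solution of `A M + M Aᴴ = -Q` with `Q ⪰ 0` is
positive semidefinite: for fixed `x`, the function `t ↦ xᴴ e^{tA} M e^{tAᴴ} x` has derivative
`-xᴴ e^{tA} Q e^{tAᴴ} x ≤ 0` and tends to `0` as `t → ∞`, since `e^{tAᴴ} x` decays (on a
generalised eigenspace for `μ` it is `e^{tμ}` times a polynomial in `t`, and `Re μ < 0`).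
So its value `xᴴ M x` at `t = 0` is nonnegative.
-/

open Matrix
open scoped ComplexOrder

/-- A complex square matrix is Hurwitz if every eigenvalue (i.e. every element of its
spectrum) has strictly negative real part. -/
def Matrix.IsHurwitz {k : Type*} [Fintype k] [DecidableEq k] (A : Matrix k k ℂ) : Prop :=
  ∀ μ ∈ spectrum ℂ A, μ.re < 0

/-- The complexification of a real matrix. -/
def Matrix.cplx {k l : Type*} (A : Matrix k l ℝ) : Matrix k l ℂ :=
  A.map Complex.ofReal

/-- The 2×2 symplectic matrix `J = [[0,1],[-1,0]]`. -/
def Jmat : Matrix (Fin 2) (Fin 2) ℝ := !![0, 1; -1, 0]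

open Filter Topology NormedSpace

attribute [local instance] Matrix.linftyOpNormedRing Matrix.linftyOpNormedAlgebra

theorem tendsto_pow_mul_cexp_atTop_nhds_zero {μ : ℂ} (hμ : μ.re < 0) (j : ℕ) :
    Tendsto (fun t : ℝ => (t : ℂ) ^ j * Complex.exp (t * μ)) atTop (𝓝 0) := by
  rw [tendsto_zero_iff_norm_tendsto_zero]
  refine (tendsto_rpow_mul_exp_neg_mul_atTop_nhds_zero j (-μ.re) (neg_pos.2 hμ)).congr' ?_
  filter_upwards [eventually_ge_atTop 0] with t ht
  rw [norm_mul, norm_pow, Complex.norm_real, Real.norm_of_nonneg ht, Complex.norm_exp,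
    Real.rpow_natCast]
  simp [mul_comm]

theorem hasDerivAt_exp_smul_mul_mul_exp_smul {𝔸 : Type*} [NormedRing 𝔸] [NormedAlgebra ℝ 𝔸]
    [CompleteSpace 𝔸] (a b m : 𝔸) (t : ℝ) :
    HasDerivAt (fun s : ℝ => exp (s • a) * m * exp (s • b))
      (exp (t • a) * (a * m + m * b) * exp (t • b)) t := by
  convert ((hasDerivAt_exp_smul_const' a t).mul_const m).fun_mul
    (hasDerivAt_exp_smul_const b t) using 1
  rw [((Commute.refl a).smul_right t).exp_right.eq,
    ← ((Commute.refl b).smul_right t).exp_right.eq]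
  noncomm_ring

theorem Jmat_transpose : Jmatᵀ = -Jmat := by
  ext i j
  fin_cases i <;> fin_cases j <;> simp [Jmat]

namespace Matrix

section Hurwitz

variable {k : Type*} [Fintype k] [DecidableEq k]

theorem IsHurwitz.conjTranspose {A : Matrix k k ℂ} (hA : A.IsHurwitz) : Aᴴ.IsHurwitz := by
  intro μ hμ
  rw [← star_eq_conjTranspose, spectrum.map_star] at hμ
  simpa using hA _ hμ

theorem exp_smul_mulVec_eq_sum_of_pow_sub_mulVec_eq_zero {A : Matrix k k ℂ} {μ : ℂ} {v : k → ℂ}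
    {d : ℕ} (hv : (A - μ • 1) ^ d *ᵥ v = 0) (t : ℝ) :
    exp (t • A) *ᵥ v = ∑ j ∈ Finset.range d,
      ((t : ℂ) ^ j * Complex.exp (t * μ) / j.factorial) • ((A - μ • 1) ^ j *ᵥ v) := by
  set N := A - μ • 1
  have hcomm : Commute ((t * μ : ℂ) • (1 : Matrix k k ℂ)) (t • N) :=
    ((Commute.one_left N).smul_right t).smul_left _
  have hsplit : t • A = (t * μ : ℂ) • (1 : Matrix k k ℂ) + t • N := by
    rw [mul_smul, Complex.coe_smul, ← smul_add, add_sub_cancel]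
  have hscalar : exp ((t * μ : ℂ) • (1 : Matrix k k ℂ)) = Complex.exp (t * μ) • 1 := by
    rw [← Algebra.algebraMap_eq_smul_one, ← Algebra.algebraMap_eq_smul_one, Complex.exp_eq_exp_ℂ]
    exact (algebraMap_exp_comm _).symm
  have hseries : HasSum (fun j : ℕ => ((j.factorial : ℂ)⁻¹ • (t • N) ^ j) *ᵥ v)
      (exp (t • N) *ᵥ v) :=
    (exp_series_hasSum_exp' (𝕂 := ℂ) (t • N)).map (mulVec.addMonoidHomLeft v)
      (continuous_id.matrix_mulVec continuous_const)
  have hfinite :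
      exp (t • N) *ᵥ v = ∑ j ∈ Finset.range d, ((j.factorial : ℂ)⁻¹ • (t • N) ^ j) *ᵥ v := by
    refine hseries.unique (hasSum_sum_of_ne_finset_zero fun j hj => ?_)
    rw [Finset.mem_range, not_lt] at hj
    have hvanish : N ^ j *ᵥ v = 0 := by
      rw [← Nat.sub_add_cancel hj, pow_add, ← mulVec_mulVec, hv, mulVec_zero]
    simp only [smul_pow, smul_mulVec, hvanish, smul_zero]
  rw [hsplit, exp_add_of_commute _ _ hcomm, hscalar, smul_mul_assoc, one_mul, smul_mulVec,
    hfinite, Finset.smul_sum]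
  refine Finset.sum_congr rfl fun j _ => ?_
  simp only [smul_pow, smul_mulVec, smul_smul, ← Complex.coe_smul]
  congr 1
  ring

theorem mem_spectrum_of_mem_maxGenEigenspace {A : Matrix k k ℂ} {μ : ℂ} {v : k → ℂ}
    (hv : v ∈ Module.End.maxGenEigenspace (toLinAlgEquiv' A) μ) (hv0 : v ≠ 0) :
    μ ∈ spectrum ℂ A := by
  rw [← AlgEquiv.spectrum_eq toLinAlgEquiv' A]
  refine Module.End.HasUnifEigenvalue.mem_spectrum ?_
  exact (Module.End.hasUnifEigenvalue_iff_hasUnifEigenvalue_one (by simp)).1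
    ((Submodule.ne_bot_iff _).2 ⟨v, hv, hv0⟩)

theorem IsHurwitz.tendsto_exp_smul_mulVec_atTop_nhds_zero {A : Matrix k k ℂ} (hA : A.IsHurwitz)
    (v : k → ℂ) :
    Tendsto (fun t : ℝ => exp (t • A) *ᵥ v) atTop (𝓝 0) := by
  have hv : v ∈ ⨆ μ, Module.End.maxGenEigenspace (toLinAlgEquiv' A) μ := by
    rw [Module.End.iSup_maxGenEigenspace_eq_top]; trivial
  refine Submodule.iSup_induction (motive := fun w => Tendsto (fun t : ℝ => exp (t • A) *ᵥ w)
    atTop (𝓝 0)) _ hv (fun μ x hx => ?_) (by simp) fun x y hx hy => ?_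
  · obtain rfl | hx0 := eq_or_ne x 0
    · simp
    have hμ := hA μ (mem_spectrum_of_mem_maxGenEigenspace hx hx0)
    obtain ⟨d, hd⟩ := (Module.End.mem_maxGenEigenspace _ _ _).1 hx
    have hd' : (A - μ • 1) ^ d *ᵥ x = 0 := by
      rwa [← map_one toLinAlgEquiv', ← map_smul, ← map_sub, ← map_pow, toLinAlgEquiv'_apply] at hd
    simp_rw [exp_smul_mulVec_eq_sum_of_pow_sub_mulVec_eq_zero hd']
    simpa using tendsto_finsetSum _ fun j _ =>
      ((tendsto_pow_mul_cexp_atTop_nhds_zero hμ j).div_const _).smul_const ((A - μ • 1) ^ j *ᵥ x)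
  · simpa [mulVec_add] using hx.add hy

theorem exp_smul_conjTranspose (A : Matrix k k ℂ) (t : ℝ) : exp (t • Aᴴ) = (exp (t • A))ᴴ := by
  rw [← exp_conjTranspose, conjTranspose_smul, star_trivial]

theorem IsHurwitz.posSemidef_of_lyapunov {A M Q : Matrix k k ℂ} (hA : A.IsHurwitz)
    (hM : M.IsHermitian) (hQ : Q.PosSemidef) (h : A * M + M * Aᴴ + Q = 0) : M.PosSemidef := by
  refine posSemidef_iff_dotProduct_mulVec.2 ⟨hM, fun x => ?_⟩
  let form : Matrix k k ℂ →ₗ[ℝ] ℝ :=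
    { toFun := fun N => (star x ⬝ᵥ N *ᵥ x).re
      map_add' := fun N₁ N₂ => by simp [add_mulVec, dotProduct_add]
      map_smul' := fun c N => by simp [smul_mulVec] }
  let g : ℝ → ℝ := fun t => form (exp (t • A) * M * exp (t • Aᴴ))
  have hg_anti : Antitone g := by
    refine antitone_of_hasDerivAt_nonpos (fun t =>
      (LinearMap.toContinuousLinearMap form).hasFDerivAt.comp_hasDerivAt t
        (hasDerivAt_exp_smul_mul_mul_exp_smul A Aᴴ M t)) fun t => ?_
    change form (exp (t • A) * (A * M + M * Aᴴ) * exp (t • Aᴴ)) ≤ 0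
    have hQt := (hQ.mul_mul_conjTranspose_same (exp (t • A))).dotProduct_mulVec_nonneg x
    rw [← exp_smul_conjTranspose] at hQt
    simpa [form, eq_neg_iff_add_eq_zero.2 h, neg_mulVec] using (RCLike.nonneg_iff.1 hQt).1
  have hg_lim : Tendsto g atTop (𝓝 0) := by
    have hquad : Continuous fun y : k → ℂ => (star y ⬝ᵥ M *ᵥ y).re := by
      simp only [dotProduct, mulVec, Pi.star_apply]
      fun_prop
    have hlim :=
      (hquad.tendsto 0).comp (hA.conjTranspose.tendsto_exp_smul_mulVec_atTop_nhds_zero x)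
    simp only [Function.comp_def, star_zero, zero_dotProduct, Complex.zero_re] at hlim
    refine hlim.congr fun t => ?_
    simp only [g, form, LinearMap.coe_mk, AddHom.coe_mk, exp_smul_conjTranspose A t, star_mulVec,
      conjTranspose_conjTranspose, ← dotProduct_mulVec, mulVec_mulVec, mul_assoc]
  have hg0 : 0 ≤ g 0 := le_of_tendsto hg_lim <|
    (eventually_ge_atTop 0).mono fun t ht => hg_anti ht
  refine RCLike.nonneg_iff.2 ⟨by simpa [g, form] using hg0, hM.im_star_dotProduct_mulVec_self x⟩

end Hurwitz

theorem lyapunov_add_I_smul {k l : Type*} [Fintype k] [Fintype l]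
    {A P Θ : Matrix k k ℂ} {B : Matrix k l ℂ} {S T : Matrix l l ℂ}
    (hP : A * P + P * Aᴴ + B * S * Bᴴ = 0)
    (hΘ : A * Θ + Θ * Aᴴ - Complex.I • (B * T * Bᴴ) = 0) :
    A * (P + Complex.I • Θ) + (P + Complex.I • Θ) * Aᴴ + B * (S + T) * Bᴴ = 0 := by
  calc _ = (A * P + P * Aᴴ + B * S * Bᴴ)
        + Complex.I • (A * Θ + Θ * Aᴴ - Complex.I • (B * T * Bᴴ)) := by
        simp only [Matrix.mul_add, Matrix.add_mul, Matrix.mul_smul, Matrix.smul_mul, smul_add,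
          smul_sub, smul_smul, Complex.I_mul_I, neg_one_smul, sub_neg_eq_add]
        abel
    _ = 0 := by rw [hP, hΘ, smul_zero, add_zero]

section Complexification

variable {k l o : Type*}

theorem cplx_zero : (0 : Matrix k l ℝ).cplx = 0 :=
  Matrix.map_zero _ Complex.ofReal_zero

theorem cplx_add (A B : Matrix k l ℝ) : (A + B).cplx = A.cplx + B.cplx :=
  Matrix.map_add _ Complex.ofReal_add A B

theorem cplx_mul [Fintype l] (A : Matrix k l ℝ) (B : Matrix l o ℝ) :
    (A * B).cplx = A.cplx * B.cplx :=
  Matrix.map_mul (f := Complex.ofRealHom)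

theorem cplx_transpose (A : Matrix k l ℝ) : Aᵀ.cplx = A.cplxᵀ :=
  transpose_map

theorem conjTranspose_cplx (A : Matrix k l ℝ) : A.cplxᴴ = A.cplxᵀ := by
  ext i j
  simp [cplx]

theorem isHermitian_cplx_add_I_smul_cplx {P Θ : Matrix k k ℝ} (hP : P.IsSymm) (hΘ : Θᵀ = -Θ) :
    (P.cplx + Complex.I • Θ.cplx).IsHermitian := by
  rw [IsHermitian, conjTranspose_add, conjTranspose_smul, conjTranspose_cplx, conjTranspose_cplx,
    ← cplx_transpose, ← cplx_transpose, hP.eq, hΘ]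
  ext i j
  simp [cplx]

end Complexification

end Matrix

/-- A `2n`-dimensional index is modelled by `Fin 2 × Fin n`, so that `Θ = diag_n(J)` is
`blockDiagonal (fun _ => J)`. -/
theorem heisenberg_uncertainty_principle_general {n m : ℕ}
    (A : Matrix (Fin 2 × Fin n) (Fin 2 × Fin n) ℝ)
    (B : Matrix (Fin 2 × Fin n) (Fin 2 × Fin m) ℝ)
    (Sw : Matrix (Fin 2 × Fin m) (Fin 2 × Fin m) ℝ)
    (Tw : Matrix (Fin 2 × Fin m) (Fin 2 × Fin m) ℂ)
    (P : Matrix (Fin 2 × Fin n) (Fin 2 × Fin n) ℝ)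
    (Θ : Matrix (Fin 2 × Fin n) (Fin 2 × Fin n) ℝ)
    (hΘ : Θ = blockDiagonal (fun _ : Fin n => Jmat))
    (hA : A.cplx.IsHurwitz)
    (hFw : (Sw.cplx + Tw).PosSemidef)
    (hP : P.IsSymm)
    (hLyap : A * P + P * Aᵀ + B * Sw * Bᵀ = 0)
    (hComm : A.cplx * Θ.cplx + Θ.cplx * A.cplxᵀ
        - Complex.I • (B.cplx * Tw * B.cplxᵀ) = 0) :
    (P.cplx + Complex.I • Θ.cplx).PosSemidef := by
  have hΘ_skew : Θᵀ = -Θ := by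
    rw [hΘ, blockDiagonal_transpose, Jmat_transpose, ← blockDiagonal_neg]
    rfl
  have hLyapC : A.cplx * P.cplx + P.cplx * A.cplxᴴ + B.cplx * Sw.cplx * B.cplxᴴ = 0 := by
    simpa [cplx_zero, cplx_add, cplx_mul, cplx_transpose, conjTranspose_cplx] using
      congrArg cplx hLyap
  rw [← conjTranspose_cplx, ← conjTranspose_cplx] at hComm
  exact hA.posSemidef_of_lyapunov (isHermitian_cplx_add_I_smul_cplx hP hΘ_skew)
    (hFw.mul_mul_conjTranspose_same B.cplx) (lyapunov_add_I_smul hLyapC hComm)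

/-- **Heisenberg uncertainty principle for linear Gaussian quantum systems
(system theoretic form).**  Here a `2n`-dimensional index is modelled by `Fin 2 × Fin n`,
so that `Θ = diag_n(J)` is `blockDiagonal (fun _ => J)`.  If `A` is a real Hurwitz matrix,
`S_w` is real symmetric, `T_w` is Hermitian with `F_w = S_w + T_w ⪰ 0`, the real symmetric
matrix `P` solves `A P + P Aᵀ + B S_w Bᵀ = 0`, and the commutation condition
`A Θ + Θ Aᵀ - i B T_w Bᵀ = 0` holds, then `P + iΘ ⪰ 0`. -/
theorem heisenberg_uncertainty_principle {n m : ℕ}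
    (A : Matrix (Fin 2 × Fin n) (Fin 2 × Fin n) ℝ)
    (B : Matrix (Fin 2 × Fin n) (Fin 2 × Fin m) ℝ)
    (Sw : Matrix (Fin 2 × Fin m) (Fin 2 × Fin m) ℝ)
    (Tw : Matrix (Fin 2 × Fin m) (Fin 2 × Fin m) ℂ)
    (P : Matrix (Fin 2 × Fin n) (Fin 2 × Fin n) ℝ)
    (Θ : Matrix (Fin 2 × Fin n) (Fin 2 × Fin n) ℝ)
    (hΘ : Θ = blockDiagonal (fun _ : Fin n => Jmat))
    (hA : A.cplx.IsHurwitz)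
    (hSw : Sw.IsSymm)
    (hTw : Tw.IsHermitian)
    (hFw : (Sw.cplx + Tw).PosSemidef)
    (hP : P.IsSymm)
    (hLyap : A * P + P * Aᵀ + B * Sw * Bᵀ = 0)
    (hComm : A.cplx * Θ.cplx + Θ.cplx * A.cplxᵀ
        - Complex.I • (B.cplx * Tw * B.cplxᵀ) = 0) :
    (P.cplx + Complex.I • Θ.cplx).PosSemidef :=
  heisenberg_uncertainty_principle_general A B Sw Tw P Θ hΘ hA hFw hP hLyap hComm
end

section
/- (Convergence of the covariance to the steady state.) Let A be an n×n complex Hurwitz matrix and Q an n×n complex matrix, and let P∞ be the unique n×n matrix satisfying A·P∞ + P∞·Aᴴ + Q = 0. If P : ℝ → ℂ^{n×n} is differentiable and satisfies P′(t) = A·P(t) + P(t)·Aᴴ + Q for all t ≥ 0, then P(t) → P∞ as t → ∞. -/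
/-!
The deviation `E t = P t - Pinf` solves the homogeneous equation `E' = A E + E Aᴴ`, and
`s ↦ exp (-s A) * E s * exp (-s Aᴴ)` has derivative zero, so `E t = exp (t A) * E 0 * exp (t Aᴴ)`.
It remains to see `exp (t A) → 0`. If `(A - μ)^k w = 0` then
`exp (t A) w = exp (t μ) ∑_{j < k} t^j / j! (A - μ)^j w`, and each `t^j exp (t μ)` tends to zero
since `re μ < 0`; the generalized eigenvectors of `A` span `ℂⁿ`.
-/

open Matrix Filter

open NormedSpace Topology Finset
open scoped Nat

section BanachAlgebra

variable {𝔸 : Type*} [NormedRing 𝔸] [NormedAlgebra ℝ 𝔸] [CompleteSpace 𝔸]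

theorem hasDerivAt_exp_smul_neg_mul_mul_exp_smul_neg {a b : 𝔸} {E : ℝ → 𝔸} {t : ℝ}
    (hE : HasDerivAt E (a * E t + E t * b) t) :
    HasDerivAt (fun s : ℝ => exp (s • -a) * E s * exp (s • -b)) 0 t := by
  refine (((hasDerivAt_exp_smul_const (-a) t).mul hE).mul
    (hasDerivAt_exp_smul_const' (-b) t)).congr_deriv ?_
  rw [Pi.mul_apply]
  noncomm_ring

theorem eq_exp_smul_mul_mul_exp_smul_of_hasDerivAt {a b : 𝔸} {E : ℝ → 𝔸}
    (hE : ∀ t, 0 ≤ t → HasDerivAt E (a * E t + E t * b) t) {t : ℝ} (ht : 0 ≤ t) :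
    E t = exp (t • a) * E 0 * exp (t • b) := by
  set F : ℝ → 𝔸 := fun s => exp (s • -a) * E s * exp (s • -b)
  have hF : ∀ s, 0 ≤ s → HasDerivAt F 0 s := fun s hs =>
    hasDerivAt_exp_smul_neg_mul_mul_exp_smul_neg (hE s hs)
  have hFt : F t = F 0 := constant_of_has_deriv_right_zero
    (fun s hs => (hF s hs.1).continuousAt.continuousWithinAt)
    (fun s hs => (hF s hs.1).hasDerivWithinAt) t ⟨ht, le_rfl⟩
  let : NormedAlgebra ℚ 𝔸 := .restrictScalars ℚ ℝ 𝔸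
  have hinv (x : 𝔸) : exp x * exp (-x) = 1 := by
    rw [← exp_add_of_commute (Commute.refl x).neg_right, add_neg_cancel, exp_zero]
  have hinv' (x : 𝔸) : exp (-x) * exp x = 1 := by simpa using hinv (-x)
  calc E t = exp (t • a) * exp (-(t • a)) * E t * (exp (-(t • b)) * exp (t • b)) := by
        rw [hinv, hinv', one_mul, mul_one]
    _ = exp (t • a) * F t * exp (t • b) := by simp only [F, smul_neg, mul_assoc]
    _ = exp (t • a) * E 0 * exp (t • b) := by rw [hFt]; simp [F]

end BanachAlgebra

theorem tendsto_cexp_mul_mul_pow_atTop_nhds_zero {μ : ℂ} (hμ : μ.re < 0) (j : ℕ) :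
    Tendsto (fun t : ℝ => Complex.exp (t * μ) * (t : ℂ) ^ j) atTop (𝓝 0) := by
  refine squeeze_zero_norm' ?_
    (tendsto_rpow_mul_exp_neg_mul_atTop_nhds_zero j (-μ.re) (by linarith))
  filter_upwards [eventually_ge_atTop 0] with t ht
  rw [norm_mul, Complex.norm_exp, norm_pow, Complex.norm_real, Real.norm_of_nonneg ht,
    Real.rpow_natCast, mul_comm]
  simp [mul_comm]

theorem Module.End.hasEigenvalue_of_mem_maxGenEigenspace {R M : Type*} [CommRing R]
    [AddCommGroup M] [Module R M] {f : Module.End R M} {μ : R} {v : M}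
    (hv : v ∈ f.maxGenEigenspace μ) (hv0 : v ≠ 0) : f.HasEigenvalue μ :=
  HasUnifEigenvalue.lt (k := ⊤) zero_lt_one fun h => hv0 <| (Submodule.mem_bot R).1 (h ▸ hv)

section MatrixExponential

open scoped Norms.Operator

variable {m : Type*} [Fintype m] [DecidableEq m]

theorem Matrix.exp_mulVec_eq_sum_of_pow_mulVec_eq_zero {𝕂 : Type*} [RCLike 𝕂]
    {N : Matrix m m 𝕂} {w : m → 𝕂} {k : ℕ} (hw : N ^ k *ᵥ w = 0) :
    exp N *ᵥ w = ∑ j ∈ range k, (j ! : 𝕂)⁻¹ • (N ^ j *ᵥ w) := by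
  have hs : HasSum (fun j => (j ! : 𝕂)⁻¹ • (N ^ j *ᵥ w)) (exp N *ᵥ w) := by
    convert (exp_series_hasSum_exp' (𝕂 := 𝕂) N).map
      (mulVec.addMonoidHomLeft w) (continuous_id.matrix_mulVec continuous_const) using 1
    · funext j
      exact (smul_mulVec _ _ _).symm
    · rfl
  refine hs.unique (hasSum_sum_of_ne_finset_zero fun j hj => ?_)
  rw [← Nat.sub_add_cancel (not_lt.1 (mem_range.not.1 hj)), pow_add, ← mulVec_mulVec, hw,
    mulVec_zero, smul_zero]

theorem Matrix.tendsto_exp_smul_mulVec_of_pow_sub_smul_one_mulVec_eq_zero {A : Matrix m m ℂ}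
    {μ : ℂ} (hμ : μ.re < 0) {k : ℕ} {w : m → ℂ} (hw : (A - μ • 1) ^ k *ᵥ w = 0) :
    Tendsto (fun t : ℝ => exp (t • A) *ᵥ w) atTop (𝓝 0) := by
  set N := A - μ • 1
  have hexp (t : ℝ) : exp (t • A) *ᵥ w =
      ∑ j ∈ range k, (Complex.exp (t * μ) * (t : ℂ) ^ j) • ((j ! : ℂ)⁻¹ • (N ^ j *ᵥ w)) := by
    have hsplit : t • A = algebraMap ℂ _ (t * μ) + (t : ℂ) • N := by
      rw [Algebra.algebraMap_eq_smul_one, ← Complex.coe_smul]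
      simp only [N, smul_sub, smul_smul]
      abel
    have hscalar : exp (algebraMap ℂ (Matrix m m ℂ) (t * μ)) =
        algebraMap ℂ _ (exp ((t : ℂ) * μ)) :=
      (algebraMap_exp_comm _).symm
    have htN : ((t : ℂ) • N) ^ k *ᵥ w = 0 := by rw [smul_pow, smul_mulVec, hw, smul_zero]
    rw [hsplit, Matrix.exp_add_of_commute _ _ (Algebra.commute_algebraMap_left _ _),
      hscalar, ← mulVec_mulVec, exp_mulVec_eq_sum_of_pow_mulVec_eq_zero htN,
      Algebra.algebraMap_eq_smul_one, smul_mulVec, one_mulVec, smul_sum, ← Complex.exp_eq_exp_ℂ]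
    refine sum_congr rfl fun j _ => ?_
    rw [smul_pow, smul_mulVec, smul_smul, smul_smul, smul_smul]
    ring_nf
  simp_rw [hexp]
  simpa using tendsto_finsetSum _ fun j _ =>
    (tendsto_cexp_mul_mul_pow_atTop_nhds_zero hμ j).smul_const ((j ! : ℂ)⁻¹ • (N ^ j *ᵥ w))

theorem Matrix.IsHurwitz.tendsto_exp_smul_mulVec {A : Matrix m m ℂ} (hA : A.IsHurwitz)
    (v : m → ℂ) : Tendsto (fun t : ℝ => exp (t • A) *ᵥ v) atTop (𝓝 0) := by
  have hv : v ∈ ⨆ μ, Module.End.maxGenEigenspace (toLin' A) μ := by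
    rw [Module.End.iSup_maxGenEigenspace_eq_top]; trivial
  refine Submodule.iSup_induction (motive := fun v => Tendsto (fun t : ℝ => exp (t • A) *ᵥ v)
    atTop (𝓝 0)) _ hv (fun μ w hw => ?_) (by simp)
    fun x y hx hy => by simpa [mulVec_add] using hx.add hy
  rcases eq_or_ne w 0 with rfl | hw0
  · simp
  have hμ : μ.re < 0 := hA μ <| spectrum_toLin' A ▸
    Module.End.hasEigenvalue_iff_mem_spectrum.1
      (Module.End.hasEigenvalue_of_mem_maxGenEigenspace hw hw0)
  obtain ⟨k, hk⟩ := (Module.End.mem_maxGenEigenspace _ _ _).1 hw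
  refine tendsto_exp_smul_mulVec_of_pow_sub_smul_one_mulVec_eq_zero hμ (k := k) ?_
  rwa [← toLin'_apply, toLin'_pow, map_sub, map_smul, toLin'_one, ← Module.End.one_eq_id]

theorem Matrix.IsHurwitz.tendsto_exp_smul {A : Matrix m m ℂ} (hA : A.IsHurwitz) :
    Tendsto (fun t : ℝ => exp (t • A)) atTop (𝓝 0) := by
  refine tendsto_pi_nhds.2 fun i => tendsto_pi_nhds.2 fun j => ?_
  simpa [Function.comp_def, mulVec_single] using
    ((continuous_apply i).tendsto 0).comp (hA.tendsto_exp_smul_mulVec (Pi.single j 1))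

theorem Matrix.IsHurwitz.tendsto_exp_smul_conjTranspose {A : Matrix m m ℂ} (hA : A.IsHurwitz) :
    Tendsto (fun t : ℝ => exp (t • Aᴴ)) atTop (𝓝 0) := by
  simpa [Function.comp_def, ← exp_conjTranspose, conjTranspose_smul] using
    (continuous_id.matrix_conjTranspose.tendsto 0).comp hA.tendsto_exp_smul

end MatrixExponential

attribute [local instance] Matrix.normedAddCommGroup Matrix.normedSpace

/-- **Convergence of the covariance to the steady state.**
If `A` is Hurwitz, `Pinf` solves the algebraic Lyapunov equation `A P + P Aᴴ + Q = 0`,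
and the differentiable function `P` satisfies `P′(t) = A P(t) + P(t) Aᴴ + Q` for all
`t ≥ 0`, then `P(t) → Pinf` as `t → ∞`. -/
theorem lyapunov_ode_tendsto_steady_state {n : ℕ}
    (A Q Pinf : Matrix (Fin n) (Fin n) ℂ)
    (hA : A.IsHurwitz)
    (hPinf : A * Pinf + Pinf * Aᴴ + Q = 0)
    (P : ℝ → Matrix (Fin n) (Fin n) ℂ)
    (hdiff : Differentiable ℝ P)
    (hode : ∀ t : ℝ, 0 ≤ t → deriv P t = A * P t + P t * Aᴴ + Q) :
    Tendsto P atTop (nhds Pinf) := by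
  have hE : ∀ t, 0 ≤ t →
      HasDerivAt (fun s => P s - Pinf) (A * (P t - Pinf) + (P t - Pinf) * Aᴴ) t := by
    intro t ht
    have hP : HasDerivAt P (A * P t + P t * Aᴴ + Q) t := hode t ht ▸ (hdiff t).hasDerivAt
    refine (hP.sub_const Pinf).congr_deriv ?_
    rw [eq_neg_of_add_eq_zero_right hPinf]
    noncomm_ring
  have hsol : ∀ t, 0 ≤ t → P t - Pinf = exp (t • A) * (P 0 - Pinf) * exp (t • Aᴴ) := by
    open scoped Norms.Operator in
    exact fun t ht => eq_exp_smul_mul_mul_exp_smul_of_hasDerivAt hE ht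
  have hlim : Tendsto (fun t : ℝ => exp (t • A) * (P 0 - Pinf) * exp (t • Aᴴ) + Pinf) atTop
      (𝓝 Pinf) := by
    simpa using ((hA.tendsto_exp_smul.mul_const (P 0 - Pinf)).mul
      hA.tendsto_exp_smul_conjTranspose).add_const Pinf
  refine hlim.congr' ?_
  filter_upwards [eventually_ge_atTop 0] with t ht
  rw [← hsol t ht, sub_add_cancel]
end
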